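/- arXiv:1702.04603 — 2 statements merged into one kernel-verified Lean document; each statement's English description precedes it below -/
import Mathlib

section
/- Let R be a ternary relation on X satisfying the relational commutativity law: R x y z → R x z y for all x, y, z, and let Q be a quantale whose multiplication is commutative. Then relational convolution is commutative: f ∗_R g = g ∗_R f for all f, g : X → Q. -/
/-- Relational convolution: `(f ∗_R g) x = ⨆ {f y * g z | R x y z}`. -/
def rconv {X Q : Type*} [CompleteLattice Q] [Mul Q]
    (R : X → X → X → Prop) (f g : X → Q) : X → Q :=
  fun x => ⨆ (y) (z) (_ : R x y z), f y * g z

section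

variable {X Q : Type*} [CompleteLattice Q] [Mul Q]

theorem le_rconv {R : X → X → X → Prop} {x y z : X} (h : R x y z) (f g : X → Q) :
    f y * g z ≤ rconv R f g x :=
  le_iSup_of_le y <| le_iSup_of_le z <| le_iSup_of_le h le_rfl

theorem rconv_le_rconv_swap (mul_comm : ∀ a b : Q, a * b = b * a)
    (R : X → X → X → Prop) (rel_comm : ∀ x y z, R x y z → R x z y) (f g : X → Q) :
    rconv R f g ≤ rconv R g f := fun x =>
  iSup₂_le fun y z => iSup_le fun h => mul_comm (f y) (g z) ▸ le_rconv (rel_comm x y z h) g f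

end

theorem rconv_comm_general {X Q : Type*} [CompleteLattice Q] [Mul Q]
    (mul_comm : ∀ a b : Q, a * b = b * a)
    (R : X → X → X → Prop)
    (rel_comm : ∀ x y z, R x y z → R x z y)
    (f g : X → Q) :
    rconv R f g = rconv R g f :=
  le_antisymm (rconv_le_rconv_swap mul_comm R rel_comm f g)
    (rconv_le_rconv_swap mul_comm R rel_comm g f)

theorem rconv_comm {X Q : Type*} [CompleteLattice Q] [Mul Q]
    (mul_assoc : ∀ a b c : Q, a * b * c = a * (b * c))
    (mul_comm : ∀ a b : Q, a * b = b * a)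
    (hdistl : ∀ (A : Set Q) (b : Q), sSup A * b = ⨆ a ∈ A, a * b)
    (hdistr : ∀ (a : Q) (B : Set Q), a * sSup B = ⨆ b ∈ B, a * b)
    (R : X → X → X → Prop)
    (rel_comm : ∀ x y z, R x y z → R x z y)
    (f g : X → Q) :
    rconv R f g = rconv R g f :=
  rconv_comm_general mul_comm R rel_comm f g
end

section
/- Let Q be a weak quantale: a complete lattice with an associative multiplication satisfying (⨆ A) * y = ⨆ {a * y | a ∈ A} for all A ⊆ Q, and x * (⨆ B) = ⨆ {x * b | b ∈ B} for all nonempty B ⊆ Q. Let (M, ·, D, E) be a partial monoid and define convolution of f, g : M → Q by (f ∗ g) x = ⨆ {f y * g z | D y z ∧ x = y · z}. Then: (1) ∗ is associative; (2) (⨆_{f ∈ F} f) ∗ g = ⨆_{f ∈ F} (f ∗ g) for every set F of functions, and f ∗ (⨆_{g ∈ G} g) = ⨆_{g ∈ G} (f ∗ g) for every nonempty set G of functions; (3) if moreover Q has a multiplicative unit 1, then id : M → Q defined by id x = 1 if x ∈ E and ⊥ otherwise is a left unit: id ∗ f = f for all f. -/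
open scoped Classical

/-- Partial semigroup axioms for a binary operation `mul` with domain of definition `D`. -/
def IsPartialSemigroup {S : Type*} (mul : S → S → S) (D : S → S → Prop) : Prop :=
  (∀ x y z : S, (D y z ∧ D x (mul y z)) ↔ (D x y ∧ D (mul x y) z)) ∧
  (∀ x y z : S, D x y → D (mul x y) z → mul (mul x y) z = mul x (mul y z))

/-- Partial monoid axioms. -/
def IsPartialMonoid {S : Type*} (mul : S → S → S) (D : S → S → Prop) (E : Set S) : Prop :=
  IsPartialSemigroup mul D ∧
  (∀ x : S, ∃ e ∈ E, D e x ∧ mul e x = x) ∧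
  (∀ x : S, ∃ e ∈ E, D x e ∧ mul x e = x) ∧
  (∀ e₁ ∈ E, ∀ e₂ ∈ E, D e₁ e₂ → e₁ = e₂)

/-- Convolution of functions from a partial monoid into a (weak) quantale:
`(f ∗ g) x = ⨆ {f y * g z | D y z ∧ x = y · z}`. -/
def pconv {M Q : Type*} [CompleteLattice Q] [Mul Q]
    (mul : M → M → M) (D : M → M → Prop) (f g : M → Q) : M → Q :=
  fun x => ⨆ (y) (z) (_ : D y z ∧ x = mul y z), f y * g z

/-!
Everything is read off through upper bounds: `pconv mul D f g x ≤ q` says exactly that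
`f y * g z ≤ q` for every factorization `x = y · z` with `D y z`. Distributing the weak quantale
multiplication over the inner suprema, both sides of associativity are bounded by `q` iff all
products `f a * g b * h c` over triple factorizations `x = a · b · c` are; the two bracketings of a
triple factorization correspond by the partial semigroup axioms. Distributing `a * -` requires
a nonempty supremum, which holds because every `x = x · e` for a right unit `e`. Finally a
defined product `e · z` with a unit `e` equals `z`, so only the units contribute to `id ∗ f`.
-/

section WeakQuantale

variable {Q : Type*} [CompleteLattice Q] [Mul Q]

theorem iSup_mul_of_sSup_mul (hdistl : ∀ (A : Set Q) (b : Q), sSup A * b = ⨆ a ∈ A, a * b)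
    {ι : Sort*} (f : ι → Q) (b : Q) : (⨆ i, f i) * b = ⨆ i, f i * b := by
  rw [← sSup_range, hdistl, iSup_range]

theorem mul_iSup_of_mul_sSup
    (hdistr : ∀ (a : Q) (B : Set Q), B.Nonempty → a * sSup B = ⨆ b ∈ B, a * b)
    {ι : Sort*} [Nonempty ι] (a : Q) (f : ι → Q) : a * (⨆ i, f i) = ⨆ i, a * f i := by
  rw [← sSup_range, hdistr a _ (Set.range_nonempty f), iSup_range]

theorem bot_mul_of_sSup_mul (hdistl : ∀ (A : Set Q) (b : Q), sSup A * b = ⨆ a ∈ A, a * b)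
    (b : Q) : ⊥ * b = ⊥ := by
  simpa using hdistl ∅ b

end WeakQuantale

section PartialMonoid

variable {M : Type*} {mul : M → M → M} {D : M → M → Prop} {E : Set M}

theorem IsPartialMonoid.exists_factorization (hM : IsPartialMonoid mul D E) (x : M) :
    ∃ y z, D y z ∧ x = mul y z := by
  obtain ⟨e, -, hD, hxe⟩ := hM.2.2.1 x
  exact ⟨x, e, hD, hxe.symm⟩

theorem IsPartialMonoid.mul_eq_right_of_mem (hM : IsPartialMonoid mul D E) {e z : M}
    (he : e ∈ E) (hD : D e z) : mul e z = z := by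
  obtain ⟨e', he', hD', hez⟩ := hM.2.1 z
  rw [← hez] at hD
  have hee' : D e e' := ((hM.1.1 e e' z).mp ⟨hD', hD⟩).1
  rw [hM.2.2.2 e he e' he' hee', hez]

end PartialMonoid

section Convolution

variable {M Q : Type*} [CompleteLattice Q] [Mul Q] {mul : M → M → M} {D : M → M → Prop}

theorem pconv_apply_le_iff {f g : M → Q} {x : M} {q : Q} :
    pconv mul D f g x ≤ q ↔ ∀ y z, D y z → x = mul y z → f y * g z ≤ q := by
  simp [pconv]

theorem le_pconv_apply (f g : M → Q) {y z : M} (hD : D y z) :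
    f y * g z ≤ pconv mul D f g (mul y z) :=
  pconv_apply_le_iff.mp le_rfl y z hD rfl

theorem pconv_apply_eq_iSup_subtype (f g : M → Q) (x : M) :
    pconv mul D f g x = ⨆ p : {p : M × M // D p.1 p.2 ∧ x = mul p.1 p.2}, f p.1.1 * g p.1.2 := by
  rw [pconv, iSup_subtype, iSup_prod]

theorem pconv_apply_mul_le_iff (hdistl : ∀ (A : Set Q) (b : Q), sSup A * b = ⨆ a ∈ A, a * b)
    {f g : M → Q} {u : M} {c q : Q} :
    pconv mul D f g u * c ≤ q ↔ ∀ a b, D a b → u = mul a b → f a * g b * c ≤ q := by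
  simp only [pconv, iSup_mul_of_sSup_mul hdistl, iSup_le_iff, and_imp]

theorem mul_pconv_apply_le_iff
    (hdistr : ∀ (a : Q) (B : Set Q), B.Nonempty → a * sSup B = ⨆ b ∈ B, a * b)
    {g h : M → Q} {v : M} (hv : ∃ b c, D b c ∧ v = mul b c) {a q : Q} :
    a * pconv mul D g h v ≤ q ↔ ∀ b c, D b c → v = mul b c → a * (g b * h c) ≤ q := by
  obtain ⟨b, c, hbc⟩ := hv
  have : Nonempty {p : M × M // D p.1 p.2 ∧ v = mul p.1 p.2} := ⟨⟨(b, c), hbc⟩⟩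
  simp only [pconv_apply_eq_iSup_subtype, mul_iSup_of_mul_sSup hdistr, iSup_le_iff,
    Subtype.forall, Prod.forall, and_imp]

theorem pconv_iSup_left (hdistl : ∀ (A : Set Q) (b : Q), sSup A * b = ⨆ a ∈ A, a * b)
    {ι : Sort*} (f : ι → M → Q) (g : M → Q) :
    pconv mul D (⨆ i, f i) g = ⨆ i, pconv mul D (f i) g := by
  funext x
  refine eq_of_forall_ge_iff fun q => ?_
  simp only [pconv_apply_le_iff, iSup_apply, iSup_le_iff, iSup_mul_of_sSup_mul hdistl]
  exact ⟨fun H i y z hD hx => H y z hD hx i, fun H y z hD hx i => H i y z hD hx⟩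

theorem pconv_iSup_right
    (hdistr : ∀ (a : Q) (B : Set Q), B.Nonempty → a * sSup B = ⨆ b ∈ B, a * b)
    {ι : Sort*} [Nonempty ι] (f : M → Q) (g : ι → M → Q) :
    pconv mul D f (⨆ i, g i) = ⨆ i, pconv mul D f (g i) := by
  funext x
  refine eq_of_forall_ge_iff fun q => ?_
  simp only [pconv_apply_le_iff, iSup_apply, iSup_le_iff, mul_iSup_of_mul_sSup hdistr]
  exact ⟨fun H i y z hD hx => H y z hD hx i, fun H y z hD hx i => H i y z hD hx⟩

theorem pconv_assoc (mul_assoc : ∀ a b c : Q, a * b * c = a * (b * c))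
    (hdistl : ∀ (A : Set Q) (b : Q), sSup A * b = ⨆ a ∈ A, a * b)
    (hdistr : ∀ (a : Q) (B : Set Q), B.Nonempty → a * sSup B = ⨆ b ∈ B, a * b)
    (hS : IsPartialSemigroup mul D) (hfact : ∀ x, ∃ y z, D y z ∧ x = mul y z)
    (f g h : M → Q) :
    pconv mul D (pconv mul D f g) h = pconv mul D f (pconv mul D g h) := by
  obtain ⟨hD, hassoc⟩ := hS
  funext x
  refine eq_of_forall_ge_iff fun q => ?_
  simp only [pconv_apply_le_iff, pconv_apply_mul_le_iff hdistl,
    mul_pconv_apply_le_iff hdistr (hfact _), mul_assoc]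
  constructor
  · rintro H a _ ha_bc hx b c hbc rfl
    obtain ⟨hab, hab_c⟩ := (hD a b c).mp ⟨hbc, ha_bc⟩
    exact H _ c hab_c (hx.trans (hassoc a b c hab hab_c).symm) a b hab rfl
  · rintro H _ c hab_c hx a b hab rfl
    obtain ⟨hbc, ha_bc⟩ := (hD a b c).mpr ⟨hab, hab_c⟩
    exact H a _ ha_bc (hx.trans (hassoc a b c hab hab_c)) b c hbc rfl

theorem pconv_units_left [One Q] (one_mul : ∀ a : Q, 1 * a = a)
    (hdistl : ∀ (A : Set Q) (b : Q), sSup A * b = ⨆ a ∈ A, a * b)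
    {E : Set M} (hM : IsPartialMonoid mul D E) (f : M → Q) :
    pconv mul D (fun x => if x ∈ E then (1 : Q) else ⊥) f = f := by
  funext x
  refine le_antisymm (pconv_apply_le_iff.mpr fun e z hD hx => ?_) ?_
  · split_ifs with he
    · rw [one_mul, hx, hM.mul_eq_right_of_mem he hD]
    · rw [bot_mul_of_sSup_mul hdistl]
      exact bot_le
  · obtain ⟨e, he, hD, hex⟩ := hM.2.1 x
    have := le_pconv_apply (mul := mul) (fun y => if y ∈ E then (1 : Q) else ⊥) f hD
    rwa [hex, if_pos he, one_mul] at this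

end Convolution

theorem weak_quantale_lifting {M Q : Type*} [CompleteLattice Q] [Mul Q] [One Q]
    (mul_assoc : ∀ a b c : Q, a * b * c = a * (b * c))
    (hdistl : ∀ (A : Set Q) (b : Q), sSup A * b = ⨆ a ∈ A, a * b)
    (hdistr : ∀ (a : Q) (B : Set Q), B.Nonempty → a * sSup B = ⨆ b ∈ B, a * b)
    (mul : M → M → M) (D : M → M → Prop) (E : Set M)
    (hM : IsPartialMonoid mul D E) :
    (∀ f g h : M → Q,
      pconv mul D (pconv mul D f g) h = pconv mul D f (pconv mul D g h)) ∧
    (∀ (F : Set (M → Q)) (g : M → Q),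
      pconv mul D (sSup F) g = ⨆ f ∈ F, pconv mul D f g) ∧
    (∀ (f : M → Q) (G : Set (M → Q)), G.Nonempty →
      pconv mul D f (sSup G) = ⨆ g ∈ G, pconv mul D f g) ∧
    ((∀ a : Q, 1 * a = a) → (∀ a : Q, a * 1 = a) →
      ∀ f : M → Q, pconv mul D (fun x => if x ∈ E then (1 : Q) else ⊥) f = f) := by
  refine ⟨pconv_assoc mul_assoc hdistl hdistr hM.1 hM.exists_factorization,
    fun F g => ?_, fun f G hG => ?_, fun one_mul _ => pconv_units_left one_mul hdistl hM⟩
  · rw [sSup_eq_iSup', pconv_iSup_left hdistl, iSup_subtype']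
  · have : Nonempty G := hG.to_subtype
    rw [sSup_eq_iSup', pconv_iSup_right hdistr, iSup_subtype']
end
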